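/- arXiv:2210.00245 — 3 statements merged into one kernel-verified Lean document; each statement's English description precedes it below -/
import Mathlib

section
/- Fix n ≥ 1, work over M_{2n}, and let c ≤ n − 2. Let C1 = (C'1, {i,j,k}) be an extended certificate of size c, and let C2 be an extended certificate of size c. If every perfect matching satisfying C1 and every perfect matching satisfying C2 are 2-intersecting, then every perfect matching satisfying C'1 and every perfect matching satisfying C2 are 2-intersecting. -/
/-- A perfect matching of the complete graph on `[N]`, viewed as a fixed-point-free
involution of `Fin N`. -/
def PM (N : ℕ) := {m : Fin N → Fin N // (∀ i, m i ≠ i) ∧ ∀ i, m (m i) = i}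

instance (N : ℕ) : Fintype (PM N) := Subtype.fintype _
instance (N : ℕ) : DecidableEq (PM N) := fun a b =>
  decidable_of_iff (a.1 = b.1) Subtype.ext_iff.symm

/-- The edge set of a perfect matching. -/
def PM.edges {N : ℕ} (m : PM N) : Finset (Sym2 (Fin N)) :=
  Finset.univ.image fun i => s(i, m.1 i)

/-- Two perfect matchings are 2-intersecting: they share at least two edges. -/
def PMTwoIntersecting {N : ℕ} (m1 m2 : PM N) : Prop :=
  2 ≤ (PM.edges m1 ∩ PM.edges m2).card

/-- A family of perfect matchings is 2-intersecting. -/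
def PMTwoIntersectingFamily {N : ℕ} (F : Finset (PM N)) : Prop :=
  ∀ m1 ∈ F, ∀ m2 ∈ F, PMTwoIntersecting m1 m2

/-- A valid certificate: a set of pairwise disjoint non-loop unordered pairs. -/
def ValidEdgeSet {N : ℕ} (C : Finset (Sym2 (Fin N))) : Prop :=
  (∀ e ∈ C, ¬ e.IsDiag) ∧
    ∀ e ∈ C, ∀ f ∈ C, e ≠ f → ∀ a : Fin N, a ∈ e → a ∉ f

/-- `m` satisfies the certificate `C`: every pair of `C` is an edge of `m`. -/
def PMSatisfies {N : ℕ} (m : PM N) (C : Finset (Sym2 (Fin N))) : Prop :=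
  ∀ e ∈ C, e ∈ PM.edges m

/-- `C` is a certificate for `m` with respect to `f`. -/
def IsPMCertFor {N : ℕ} (f : PM N → ℝ) (m : PM N) (C : Finset (Sym2 (Fin N))) : Prop :=
  ValidEdgeSet C ∧ PMSatisfies m C ∧ ∀ m' : PM N, PMSatisfies m' C → f m' = f m

/-- The certificate complexity `C(f, m)`: the minimum size of a certificate for `m`. -/
noncomputable def pmCertComplexityAt {N : ℕ} (f : PM N → ℝ) (m : PM N) : ℕ :=
  sInf {k | ∃ C : Finset (Sym2 (Fin N)), C.card = k ∧ IsPMCertFor f m C}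

/-- The certificate complexity `C(f)`: the maximum of `C(f, m)` over all `m`. -/
noncomputable def pmCertComplexity {N : ℕ} (f : PM N → ℝ) : ℕ :=
  Finset.univ.sup fun m : PM N => pmCertComplexityAt f m

/-- The monomial `m ↦ ∏_{{i,j} ∈ S} x_{ij}(m)`. -/
def pmMonomial {N : ℕ} (S : Finset (Sym2 (Fin N))) : PM N → ℝ :=
  fun m => ∏ e ∈ S, if e ∈ PM.edges m then (1 : ℝ) else 0

/-- `f : M_N → ℝ` has degree at most `d`: it is a real linear combination of monomials
`∏_{{i,j} ∈ S} x_{ij}` with `|S| ≤ d`. -/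
def PMDegLE (N d : ℕ) (f : PM N → ℝ) : Prop :=
  f ∈ Submodule.span ℝ {g : PM N → ℝ |
    ∃ S : Finset (Sym2 (Fin N)), S.card ≤ d ∧ g = pmMonomial S}

/-- The degree of `f : M_N → ℝ`. -/
noncomputable def pmDeg (N : ℕ) (f : PM N → ℝ) : ℕ :=
  sInf {d | PMDegLE N d f}

/-- The coset `U_{i↔j} = {m : m(i) = j}`, for `p = (i, j)`. -/
def PMCoset {N : ℕ} (p : Fin N × Fin N) : Set (PM N) :=
  {m : PM N | m.1 p.1 = p.2}

/-- The coset of all matchings containing the (non-loop) unordered pair `e`. -/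
def PMCosetE {N : ℕ} (e : Sym2 (Fin N)) : Set (PM N) :=
  {m : PM N | e ∈ PM.edges m}

/-- `F` is `r`-covered: it is contained in a union of `r` pairwise compatible cosets. -/
def PMRCovered {N : ℕ} (r : ℕ) (F : Finset (PM N)) : Prop :=
  ∃ P : Finset (Sym2 (Fin N)), P.card = r ∧ (∀ e ∈ P, ¬ e.IsDiag) ∧
    (∀ e ∈ P, ∀ e' ∈ P, (PMCosetE e ∩ PMCosetE e').Nonempty) ∧
    ↑F ⊆ ⋃ e ∈ P, PMCosetE e

/-- A `t`-coset of `M_N`: the set of all perfect matchings containing `t` fixed pairwise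
disjoint edges. -/
def IsPMTCoset {N : ℕ} (t : ℕ) (S : Set (PM N)) : Prop :=
  ∃ C : Finset (Sym2 (Fin N)), C.card = t ∧ ValidEdgeSet C ∧
    S = {m : PM N | ∀ e ∈ C, e ∈ PM.edges m}

/-- An extended certificate: a certificate `base` together with (optionally) a triple
`(i, j, k)` whose three induced pairs must be avoided. -/
structure ExtCert (N : ℕ) where
  base : Finset (Sym2 (Fin N))
  triple : Option (Fin N × Fin N × Fin N)

/-- Well-formedness of an extended certificate: the base is a set of pairwise disjoint
non-loop pairs, and the optional triple consists of three distinct elements not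
appearing in the base. -/
def ExtCert.Valid {N : ℕ} (E : ExtCert N) : Prop :=
  ValidEdgeSet E.base ∧
    ∀ t ∈ E.triple,
      (t.1 ≠ t.2.1 ∧ t.1 ≠ t.2.2 ∧ t.2.1 ≠ t.2.2) ∧
      ∀ e ∈ E.base, t.1 ∉ e ∧ t.2.1 ∉ e ∧ t.2.2 ∉ e

/-- The size of an extended certificate: a standard certificate of size `c` has size `c`;
an extended certificate `(C', {i,j,k})` with `|C'| = c - 1` has size `c`. -/
def ExtCert.size {N : ℕ} (E : ExtCert N) : ℕ :=
  E.base.card + if E.triple.isSome then 1 else 0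

/-- `m` satisfies the extended certificate `E`: every pair of the base is an edge of `m`,
and if a triple `(i,j,k)` is present, `m` contains none of `{i,j}, {i,k}, {j,k}`. -/
def ExtCert.Sat {N : ℕ} (E : ExtCert N) (m : PM N) : Prop :=
  (∀ e ∈ E.base, e ∈ PM.edges m) ∧
    ∀ t ∈ E.triple,
      s(t.1, t.2.1) ∉ PM.edges m ∧ s(t.1, t.2.2) ∉ PM.edges m ∧
        s(t.2.1, t.2.2) ∉ PM.edges m

private lemma pm_invol {N : ℕ} (m : PM N) (x : Fin N) : m.1 (m.1 x) = x := m.2.2 x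

private lemma pm_symm {N : ℕ} (m : PM N) {x y : Fin N} (h : m.1 x = y) : m.1 y = x := by
  rw [← h, pm_invol]

private lemma pm_mem_edges {N : ℕ} (m : PM N) (x y : Fin N) :
    s(x, y) ∈ PM.edges m ↔ m.1 x = y := by
  constructor
  · intro h
    simp only [PM.edges, Finset.mem_image, Finset.mem_univ, true_and] at h
    obtain ⟨z, hz⟩ := h
    rw [Sym2.eq_iff] at hz
    rcases hz with ⟨rfl, rfl⟩ | ⟨rfl, rfl⟩
    · rfl
    · exact pm_invol m _
  · intro h
    simp only [PM.edges, Finset.mem_image, Finset.mem_univ, true_and]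
    exact ⟨x, by rw [h]⟩

private def conjPM {N : ℕ} (σ : Equiv.Perm (Fin N)) (m : PM N) : PM N :=
  ⟨fun x => σ (m.1 (σ.symm x)),
   ⟨fun x h => m.2.1 (σ.symm x) (by
      have := congrArg σ.symm h
      simpa using this),
    fun x => by simp [m.2.2]⟩⟩

private lemma conj_swap_apply {N : ℕ} (b u : Fin N) (m : PM N) (x : Fin N) :
    (conjPM (Equiv.swap b u) m).1 x = Equiv.swap b u (m.1 (Equiv.swap b u x)) := by
  simp [conjPM]

private lemma step_lemma {N : ℕ} (C1' : Finset (Sym2 (Fin N))) (a b c' : Fin N)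
    (m1 m2 : PM N)
    (hm1 : ∀ e ∈ C1', e ∈ PM.edges m1)
    (hab : m1.1 a = b)
    (hbC : ∀ e ∈ C1', b ∉ e)
    (u : Fin N)
    (hua : u ≠ a) (hub : u ≠ b) (huc : u ≠ c')
    (huC : ∀ e ∈ C1', u ∉ e)
    (hvb : m1.1 u ≠ b) (hvc : m1.1 u ≠ c')
    (hint' : ∀ m' : PM N, (∀ e ∈ C1', e ∈ PM.edges m') →
        m'.1 a ≠ b → m'.1 a ≠ c' → m'.1 b ≠ c' →
        2 ≤ (PM.edges m' ∩ PM.edges m2).card)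
    (hlt : ¬ 2 ≤ (PM.edges m1 ∩ PM.edges m2).card) :
    m2.1 a = u ∨ m2.1 b = m1.1 u := by
  by_contra hcon
  push_neg at hcon
  obtain ⟨hcon1, hcon2⟩ := hcon
  set v := m1.1 u with hv
  have hvu : m1.1 v = u := pm_symm m1 hv.symm
  have huv : u ≠ v := by
    intro h
    exact m1.2.1 u (by rw [← hv, ← h])
  have hba : m1.1 b = a := pm_symm m1 hab
  have hanb : a ≠ b := fun h => m1.2.1 a (h ▸ hab)
  set m' := conjPM (Equiv.swap b u) m1 with hm'
  have app : ∀ x, m'.1 x = Equiv.swap b u (m1.1 (Equiv.swap b u x)) :=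
    conj_swap_apply b u m1
  have hm'a : m'.1 a = u := by
    rw [app, Equiv.swap_apply_of_ne_of_ne hanb (Ne.symm hua), hab, Equiv.swap_apply_left]
  have hm'b : m'.1 b = v := by
    rw [app, Equiv.swap_apply_left, ← hv,
      Equiv.swap_apply_of_ne_of_ne hvb (Ne.symm huv)]
  have hm'u : m'.1 u = a := by
    rw [app, Equiv.swap_apply_right, hba,
      Equiv.swap_apply_of_ne_of_ne hanb (Ne.symm hua)]
  have hm'C : ∀ e ∈ C1', e ∈ PM.edges m' := by
    intro e he
    induction e using Sym2.ind with
    | _ x y =>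
      have hxy : m1.1 x = y := (pm_mem_edges m1 x y).mp (hm1 _ he)
      have hxb : x ≠ b := by rintro rfl; exact hbC _ he (by simp)
      have hyb : y ≠ b := by rintro rfl; exact hbC _ he (by simp)
      have hxu : x ≠ u := by rintro rfl; exact huC _ he (by simp)
      have hyu : y ≠ u := by rintro rfl; exact huC _ he (by simp)
      rw [pm_mem_edges, app, Equiv.swap_apply_of_ne_of_ne hxb hxu, hxy,
        Equiv.swap_apply_of_ne_of_ne hyb hyu]
  have main : ∀ x y : Fin N, m'.1 x = y → s(x, y) ∈ PM.edges m2 →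
      s(x, y) ∈ PM.edges m1 := by
    intro x y hxy he2
    by_cases hxb : x = b
    · have hy : y = v := by rw [← hxy, hxb, hm'b]
      exact absurd (show m2.1 b = v by
        rw [← hxb, ← hy]; exact (pm_mem_edges m2 x y).mp he2) hcon2
    by_cases hxu : x = u
    · have hy : y = a := by rw [← hxy, hxu, hm'u]
      exact absurd (pm_symm m2 (show m2.1 u = a by
        rw [← hxu, ← hy]; exact (pm_mem_edges m2 x y).mp he2)) hcon1
    by_cases hyb : y = b
    · have hx : x = v := by rw [← hm'b, ← hyb]; exact (pm_symm m' hxy).symm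
      exact absurd (pm_symm m2 (show m2.1 v = b by
        rw [← hx, ← hyb]; exact (pm_mem_edges m2 x y).mp he2)) hcon2
    by_cases hyu : y = u
    · have hx : x = a := by rw [← hm'u, ← hyu]; exact (pm_symm m' hxy).symm
      exact absurd (show m2.1 a = u by
        rw [← hx, ← hyu]; exact (pm_mem_edges m2 x y).mp he2) hcon1
    · rw [app, Equiv.swap_apply_of_ne_of_ne hxb hxu] at hxy
      by_cases h1 : m1.1 x = b
      · rw [h1, Equiv.swap_apply_left] at hxy
        exact absurd hxy.symm hyu
      by_cases h2 : m1.1 x = u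
      · rw [h2, Equiv.swap_apply_right] at hxy
        exact absurd hxy.symm hyb
      · rw [Equiv.swap_apply_of_ne_of_ne h1 h2] at hxy
        exact (pm_mem_edges m1 x y).mpr hxy
  have hsub : PM.edges m' ∩ PM.edges m2 ⊆ PM.edges m1 ∩ PM.edges m2 := by
    intro e hemem
    rw [Finset.mem_inter] at hemem ⊢
    refine ⟨?_, hemem.2⟩
    obtain ⟨z, hz⟩ : ∃ z, s(z, m'.1 z) = e := by
      have := hemem.1
      simp only [PM.edges, Finset.mem_image, Finset.mem_univ, true_and] at this
      exact this
    exact hz ▸ main z _ rfl (hz ▸ hemem.2)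
  have hge := hint' m' hm'C (by rw [hm'a]; exact hub) (by rw [hm'a]; exact huc)
    (by rw [hm'b]; exact hvc)
  exact hlt (le_trans hge (Finset.card_le_card hsub))

private lemma key_lemma {N : ℕ} (C1' : Finset (Sym2 (Fin N))) (a b c' : Fin N)
    (m1 m2 : PM N)
    (hm1 : ∀ e ∈ C1', e ∈ PM.edges m1)
    (hab : m1.1 a = b)
    (hbC : ∀ e ∈ C1', b ∉ e)
    (hN : 2 * C1'.card + 4 < N)
    (hint' : ∀ m' : PM N, (∀ e ∈ C1', e ∈ PM.edges m') →
        m'.1 a ≠ b → m'.1 a ≠ c' → m'.1 b ≠ c' →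
        2 ≤ (PM.edges m' ∩ PM.edges m2).card) :
    2 ≤ (PM.edges m1 ∩ PM.edges m2).card := by
  by_contra hlt
  classical
  set U : Finset (Fin N) :=
    (C1'.biUnion fun e => Finset.univ.filter (· ∈ e)) ∪ {a, b, c', m1.1 c'} with hU
  have hmemU : ∀ x : Fin N, x ∈ U ↔
      (∃ e ∈ C1', x ∈ e) ∨ x = a ∨ x = b ∨ x = c' ∨ x = m1.1 c' := by
    intro x
    rw [hU]
    simp only [Finset.mem_union, Finset.mem_biUnion, Finset.mem_filter,
      Finset.mem_univ, true_and, Finset.mem_insert, Finset.mem_singleton]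
  have hUcard : U.card < N := by
    have h1 : (C1'.biUnion fun e => Finset.univ.filter (· ∈ e)).card ≤ 2 * C1'.card := by
      refine le_trans Finset.card_biUnion_le ?_
      calc ∑ e ∈ C1', (Finset.univ.filter (· ∈ e)).card
          ≤ ∑ _e ∈ C1', 2 := by
            refine Finset.sum_le_sum ?_
            intro e he
            induction e using Sym2.ind with
            | _ x y =>
              refine le_trans (Finset.card_le_card (fun z hz => ?_))
                (le_trans (Finset.card_insert_le x {y}) (by simp))
              simp only [Finset.mem_filter, Sym2.mem_iff] at hz
              simp [hz.2]
        _ = 2 * C1'.card := by rw [Finset.sum_const, smul_eq_mul, mul_comm]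
    have h2 : ({a, b, c', m1.1 c'} : Finset (Fin N)).card ≤ 4 :=
      calc ({a, b, c', m1.1 c'} : Finset (Fin N)).card
          ≤ ({b, c', m1.1 c'} : Finset (Fin N)).card + 1 := Finset.card_insert_le _ _
        _ ≤ (({c', m1.1 c'} : Finset (Fin N)).card + 1) + 1 :=
            Nat.add_le_add_right (Finset.card_insert_le _ _) 1
        _ ≤ ((({m1.1 c'} : Finset (Fin N)).card + 1) + 1) + 1 :=
            Nat.add_le_add_right (Nat.add_le_add_right (Finset.card_insert_le _ _) 1) 1
        _ ≤ 4 := by simp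
    have h3 := Finset.card_union_le
      (C1'.biUnion fun e => Finset.univ.filter (· ∈ e)) ({a, b, c', m1.1 c'} : Finset (Fin N))
    rw [← hU] at h3
    omega
  obtain ⟨u, hu⟩ : ∃ u, u ∉ U := by
    by_contra h
    push_neg at h
    have hle : (Finset.univ : Finset (Fin N)).card ≤ U.card :=
      Finset.card_le_card fun x _ => h x
    rw [Finset.card_univ, Fintype.card_fin] at hle
    omega
  have hclosed : ∀ x : Fin N, x ∉ U → m1.1 x ∉ U := by
    intro x hx hmx
    apply hx
    rw [hmemU] at hmx ⊢
    rcases hmx with ⟨e, he, hme⟩ | h | h | h | h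
    · left
      refine ⟨e, he, ?_⟩
      induction e using Sym2.ind with
      | _ x0 y0 =>
        have hxy : m1.1 x0 = y0 := (pm_mem_edges m1 x0 y0).mp (hm1 _ he)
        rw [Sym2.mem_iff] at hme ⊢
        rcases hme with hme | hme
        · right; rw [← hxy]; exact (pm_symm m1 hme).symm
        · left; exact ((pm_symm m1 hme).symm).trans (pm_symm m1 hxy)
    · exact Or.inr (Or.inr (Or.inl ((pm_symm m1 h).symm.trans hab)))
    · exact Or.inr (Or.inl ((pm_symm m1 h).symm.trans (pm_symm m1 hab)))
    · exact Or.inr (Or.inr (Or.inr (Or.inr (pm_symm m1 h).symm)))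
    · exact Or.inr (Or.inr (Or.inr (Or.inl ((pm_symm m1 h).symm.trans (pm_invol m1 c')))))
  have hv0 := hclosed u hu
  rw [hmemU] at hu hv0
  push_neg at hu hv0
  obtain ⟨huC, hua, hub, huc, -⟩ := hu
  obtain ⟨hvC, hva, hvb, hvc, -⟩ := hv0
  have huC' : ∀ e ∈ C1', u ∉ e := fun e he => huC e he
  have hvC' : ∀ e ∈ C1', m1.1 u ∉ e := fun e he => hvC e he
  have hvu : m1.1 (m1.1 u) = u := pm_invol m1 u
  have h1 := step_lemma C1' a b c' m1 m2 hm1 hab hbC u hua hub huc huC' hvb hvc hint' hlt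
  have h2 := step_lemma C1' a b c' m1 m2 hm1 hab hbC (m1.1 u) hva hvb hvc hvC'
    (by rw [hvu]; exact hub) (by rw [hvu]; exact huc) hint' hlt
  rw [hvu] at h2
  have huv : u ≠ m1.1 u := fun h => m1.2.1 u h.symm
  have hanb : a ≠ b := fun h => m1.2.1 a (h ▸ hab)
  rcases h1 with h1 | h1 <;> rcases h2 with h2 | h2
  · exact huv (h1.symm.trans h2)
  · exact hanb ((pm_symm m2 h1).symm.trans (pm_symm m2 h2))
  · exact hanb ((pm_symm m2 h2).symm.trans (pm_symm m2 h1))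
  · exact huv (h2.symm.trans h1)


/-- Let `c ≤ n - 2`, let `C1 = (C'1, {i,j,k})` be an extended
certificate of size `c`, and let `C2` be an extended certificate of size `c`. If every
perfect matching satisfying `C1` 2-intersects every perfect matching satisfying `C2`,
then the same holds with `C1` replaced by `C'1`. -/
theorem extended_certificate_lemma
    (n c : ℕ) (hn : 1 ≤ n) (hc : c ≤ n - 2)
    (C1' : Finset (Sym2 (Fin (2 * n)))) (i j k : Fin (2 * n))
    (hvalid1 : (ExtCert.mk C1' (some (i, j, k))).Valid)
    (hsize1 : (ExtCert.mk C1' (some (i, j, k))).size = c)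
    (C2 : ExtCert (2 * n)) (hvalid2 : C2.Valid) (hsize2 : C2.size = c)
    (hint : ∀ m1 m2 : PM (2 * n),
      (ExtCert.mk C1' (some (i, j, k))).Sat m1 → C2.Sat m2 → PMTwoIntersecting m1 m2) :
    ∀ m1 m2 : PM (2 * n),
      (ExtCert.mk C1' none).Sat m1 → C2.Sat m2 → PMTwoIntersecting m1 m2 := by
  obtain ⟨hval1, htr1⟩ := hvalid1
  have htriple := htr1 (i, j, k) rfl
  obtain ⟨⟨hij', hik', hjk'⟩, hnotin⟩ := htriple
  have hcard : C1'.card + 1 = c := by simpa [ExtCert.size] using hsize1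
  have hN : 2 * C1'.card + 4 < 2 * n := by omega
  intro m1 m2 hm1 hm2
  obtain ⟨hm1b, -⟩ := hm1
  have hsat : ∀ m' : PM (2 * n), (∀ e ∈ C1', e ∈ PM.edges m') →
      m'.1 i ≠ j → m'.1 i ≠ k → m'.1 j ≠ k →
      (ExtCert.mk C1' (some (i, j, k))).Sat m' := by
    intro m' hb h1 h2 h3
    refine ⟨hb, ?_⟩
    intro t ht
    simp only [Option.mem_def, Option.some.injEq] at ht
    subst ht
    refine ⟨fun h => h1 ((pm_mem_edges m' i j).mp h),
      fun h => h2 ((pm_mem_edges m' i k).mp h),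
      fun h => h3 ((pm_mem_edges m' j k).mp h)⟩
  by_cases hij : m1.1 i = j
  · exact key_lemma C1' i j k m1 m2 hm1b hij (fun e he => (hnotin e he).2.1) hN
      (fun m' hb h1 h2 h3 => hint m' m2 (hsat m' hb h1 h2 h3) hm2)
  · by_cases hik : m1.1 i = k
    · exact key_lemma C1' i k j m1 m2 hm1b hik (fun e he => (hnotin e he).2.2) hN
        (fun m' hb h1 h2 h3 => hint m' m2
          (hsat m' hb h2 h1 (fun h => h3 (pm_symm m' h))) hm2)
    · by_cases hjk : m1.1 j = k
      · exact key_lemma C1' j k i m1 m2 hm1b hjk (fun e he => (hnotin e he).2.2) hN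
          (fun m' hb h1 h2 h3 => hint m' m2
            (hsat m' hb (fun h => h2 (pm_symm m' h)) (fun h => h3 (pm_symm m' h)) h1) hm2)
      · exact hint m1 m2 (hsat m1 hm1b hij hik hjk) hm2
end

section
/- Let f be the characteristic function of a 2-intersecting family F ⊆ M_{2n}, and suppose C(f) ≤ n − 2. If m ∈ F, then F is r-covered for r = C(f,m) − 1. -/
/-!
Take a minimum certificate `C` for `m`; since `|C| ≤ n - 2`, at least four vertices are not
covered by `C`. If some `m' ∈ F` contained at most one edge of `C`, complete `C` to a matching
`m''` sharing no edge with `m'` outside `C`: starting from `m`, repeatedly re-pair a common edge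
`{a, m a}` and another edge `{c, m c}` off `C` into `{a, c}, {m a, m c}`. As `m'` matches `a` with
`m a`, this lowers the number of vertices off `C` at which the matching agrees with `m'`. The
certificate puts `m''` in `F`, but `m''` meets `m'` in fewer than two edges. Hence every member of
`F` contains two edges of `C`, so one of `C` minus a fixed edge, and these `|C| - 1` cosets are
compatible because `m` lies in all of them.
-/

open Finset

namespace PM

variable {N : ℕ}

lemma mem_edges {m : PM N} {e : Sym2 (Fin N)} : e ∈ m.edges ↔ ∃ i, s(i, m.1 i) = e := by
  simp [PM.edges]

lemma mk_mem_edges (m : PM N) (i : Fin N) : s(i, m.1 i) ∈ m.edges :=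
  mem_edges.2 ⟨i, rfl⟩

lemma mk_mem_edges_iff {m : PM N} {i j : Fin N} : s(i, j) ∈ m.edges ↔ m.1 i = j := by
  refine ⟨fun h => ?_, fun h => h ▸ mk_mem_edges m i⟩
  obtain ⟨k, hk⟩ := mem_edges.1 h
  rcases Sym2.eq_iff.1 hk with ⟨rfl, rfl⟩ | ⟨rfl, rfl⟩
  · rfl
  · exact m.2.2 _

lemma mk_apply_apply (m : PM N) (i : Fin N) : s(m.1 i, m.1 (m.1 i)) = s(i, m.1 i) := by
  rw [m.2.2, Sym2.eq_swap]

lemma eq_mk_of_mem_edges {m : PM N} {e : Sym2 (Fin N)} (he : e ∈ m.edges) {a : Fin N}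
    (ha : a ∈ e) : e = s(a, m.1 a) := by
  obtain ⟨i, rfl⟩ := mem_edges.1 he
  rcases Sym2.mem_iff.1 ha with rfl | rfl
  · rfl
  · exact (mk_apply_apply m i).symm

lemma not_isDiag_of_mem_edges {m : PM N} {e : Sym2 (Fin N)} (he : e ∈ m.edges) : ¬ e.IsDiag := by
  obtain ⟨i, rfl⟩ := mem_edges.1 he
  exact Sym2.mk_isDiag_iff.not.2 (m.2.1 i).symm

lemma validEdgeSet_edges (m : PM N) : ValidEdgeSet m.edges :=
  ⟨fun _ he => not_isDiag_of_mem_edges he, fun _ he _ he' hne _ ha ha' =>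
    hne ((eq_mk_of_mem_edges he ha).trans (eq_mk_of_mem_edges he' ha').symm)⟩

lemma filter_mk_eq_mk (m : PM N) (j : Fin N) :
    ({x | s(x, m.1 x) = s(j, m.1 j)} : Finset (Fin N)) = {j, m.1 j} := by
  ext x
  simp only [mem_filter, mem_univ, true_and, mem_insert, mem_singleton]
  refine ⟨fun h => ?_, ?_⟩
  · rcases Sym2.eq_iff.1 h with ⟨rfl, -⟩ | ⟨rfl, -⟩ <;> simp
  · rintro (rfl | rfl)
    · rfl
    · exact mk_apply_apply m j

lemma card_filter_mk_mem {m : PM N} {C : Finset (Sym2 (Fin N))} (hC : C ⊆ m.edges) :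
    #{x | s(x, m.1 x) ∈ C} = 2 * #C := by
  refine (card_eq_sum_card_fiberwise (f := fun x => s(x, m.1 x)) (t := C)
    fun x hx => (mem_filter.1 hx).2).trans ?_
  rw [mul_comm, ← smul_eq_mul, ← sum_const]
  refine sum_congr rfl fun e he => ?_
  obtain ⟨j, rfl⟩ := mem_edges.1 (hC he)
  rw [filter_filter, ← card_pair (m.2.1 j).symm, ← filter_mk_eq_mk]
  congr 1
  exact filter_congr fun x _ => ⟨fun h => h.2, fun h => ⟨by simpa only [h, mem_coe] using he, h⟩⟩

lemma two_mul_card_edges (m : PM N) : 2 * #m.edges = N := by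
  rw [← card_filter_mk_mem subset_rfl, filter_true_of_mem fun x _ => mk_mem_edges m x,
    card_univ, Fintype.card_fin]

lemma apply_injective (m : PM N) : Function.Injective m.1 :=
  Function.LeftInverse.injective m.2.2

lemma apply_apply_ne {m m' : PM N} {x : Fin N} (h : m.1 x ≠ m'.1 x) :
    m.1 (m.1 x) ≠ m'.1 (m.1 x) := by
  rw [m.2.2]
  exact fun h' => h ((congrArg m'.1 h').trans (m'.2.2 _)).symm

def conj (σ : Equiv.Perm (Fin N)) (m : PM N) : PM N :=
  ⟨fun x => σ (m.1 (σ.symm x)),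
    fun x h => m.2.1 (σ.symm x) ((Equiv.eq_symm_apply σ).2 h),
    fun x => by simp only [Equiv.symm_apply_apply, m.2.2, Equiv.apply_symm_apply]⟩

section SwapConj

variable {m : PM N} {a c : Fin N}

lemma conj_swap_apply_of_ne {x : Fin N} (hxa : x ≠ a) (hxb : x ≠ m.1 a) (hxc : x ≠ c)
    (hxd : x ≠ m.1 c) : (m.conj (Equiv.swap (m.1 a) c)).1 x = m.1 x := by
  simp only [conj, Equiv.symm_swap]
  rw [Equiv.swap_apply_of_ne_of_ne hxb hxc,
    Equiv.swap_apply_of_ne_of_ne ((apply_injective m).ne hxa)]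
  exact fun h => hxd (by rw [← h, m.2.2])

lemma conj_swap_apply_left (hca : c ≠ a) : (m.conj (Equiv.swap (m.1 a) c)).1 a = c := by
  simp only [conj, Equiv.symm_swap]
  rw [Equiv.swap_apply_of_ne_of_ne (m.2.1 a).symm hca.symm, Equiv.swap_apply_left]

lemma conj_swap_apply_apply_left (hca : c ≠ a) :
    (m.conj (Equiv.swap (m.1 a) c)).1 (m.1 a) = m.1 c := by
  simp only [conj, Equiv.symm_swap]
  rw [Equiv.swap_apply_left,
    Equiv.swap_apply_of_ne_of_ne ((apply_injective m).ne hca) (m.2.1 c)]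

end SwapConj

def agreeOff (m m' : PM N) (C : Finset (Sym2 (Fin N))) : Finset (Fin N) :=
  {x | m.1 x = m'.1 x ∧ s(x, m.1 x) ∉ C}

lemma exists_card_agreeOff_lt {m m' : PM N} {C : Finset (Sym2 (Fin N))} (hC : C ⊆ m.edges)
    {a c : Fin N} (ha : a ∈ agreeOff m m' C) (hca : c ≠ a) (hcb : c ≠ m.1 a)
    (hcC : s(c, m.1 c) ∉ C) :
    ∃ m₂ : PM N, C ⊆ m₂.edges ∧ #(agreeOff m₂ m' C) < #(agreeOff m m' C) := by
  obtain ⟨hab, haC⟩ := (mem_filter.1 ha).2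
  set m₂ := m.conj (Equiv.swap (m.1 a) c)
  have hma : m₂.1 a = c := conj_swap_apply_left hca
  have hmb : m₂.1 (m.1 a) = m.1 c := conj_swap_apply_apply_left hca
  have hne_a : m₂.1 a ≠ m'.1 a := by rw [hma, ← hab]; exact hcb
  have hne_b : m₂.1 (m.1 a) ≠ m'.1 (m.1 a) := by
    rw [hmb, hab, m'.2.2]
    exact fun h => hcb (by rw [← h, m.2.2])
  have hagree : ∀ x, m₂.1 x = m'.1 x → m₂.1 x = m.1 x := fun x hx =>
    conj_swap_apply_of_ne (by rintro rfl; exact hne_a hx) (by rintro rfl; exact hne_b hx)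
      (by rintro rfl; exact apply_apply_ne hne_a (by rwa [hma]))
      (by rintro rfl; exact apply_apply_ne hne_b (by rwa [hmb]))
  have hC₂ : ∀ x, s(x, m.1 x) ∈ C → m₂.1 x = m.1 x := fun x hx =>
    conj_swap_apply_of_ne (by rintro rfl; exact haC hx)
      (by rintro rfl; exact haC (mk_apply_apply m a ▸ hx))
      (by rintro rfl; exact hcC hx) (by rintro rfl; exact hcC (mk_apply_apply m c ▸ hx))
  refine ⟨m₂, fun e he => ?_, card_lt_card ⟨fun x hx => ?_, fun h => ?_⟩⟩
  · obtain ⟨x, rfl⟩ := mem_edges.1 (hC he)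
    rw [← hC₂ x he]
    exact mk_mem_edges m₂ x
  · obtain ⟨hx₁, hx₂⟩ := (mem_filter.1 hx).2
    have hx := hagree x hx₁
    exact mem_filter.2 ⟨mem_univ x, hx ▸ hx₁, hx ▸ hx₂⟩
  · exact hne_a (mem_filter.1 (h ha)).2.1

theorem exists_edges_inter_subset (m m' : PM N) {C : Finset (Sym2 (Fin N))} (hC : C ⊆ m.edges)
    (hN : 2 * #C + 4 ≤ N) : ∃ m'' : PM N, C ⊆ m''.edges ∧ m''.edges ∩ m'.edges ⊆ C := by
  induction h : #(agreeOff m m' C) using Nat.strong_induction_on generalizing m with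
  | _ k ih =>
  obtain hempty | ⟨a, ha⟩ := (agreeOff m m' C).eq_empty_or_nonempty
  · refine ⟨m, hC, fun e he => ?_⟩
    obtain ⟨he, he'⟩ := mem_inter.1 he
    obtain ⟨x, rfl⟩ := mem_edges.1 he
    by_contra hx
    have : x ∈ agreeOff m m' C := mem_filter.2 ⟨mem_univ x, (mk_mem_edges_iff.1 he').symm, hx⟩
    simp only [hempty, notMem_empty] at this
  · have hfree : 4 ≤ #{x | s(x, m.1 x) ∉ C} := by
      have := card_filter_add_card_filter_not (s := univ) fun x => s(x, m.1 x) ∈ C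
      rw [card_filter_mk_mem hC, card_univ, Fintype.card_fin] at this
      omega
    obtain ⟨c, hc⟩ : (({x | s(x, m.1 x) ∉ C} : Finset (Fin N)) \ {a, m.1 a}).Nonempty := by
      rw [← card_pos]
      have := le_card_sdiff {a, m.1 a} ({x | s(x, m.1 x) ∉ C} : Finset (Fin N))
      have := card_le_two (a := a) (b := m.1 a)
      omega
    simp only [mem_sdiff, mem_filter, mem_univ, true_and, mem_insert, mem_singleton,
      not_or] at hc
    obtain ⟨m₂, hC₂, hlt⟩ := exists_card_agreeOff_lt hC ha hc.2.1 hc.2.2 hc.1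
    exact ih _ (h ▸ hlt) m₂ hC₂ rfl

end PM

section Certificates

variable {N : ℕ}

lemma isPMCertFor_edges (f : PM N → ℝ) (m : PM N) : IsPMCertFor f m m.edges :=
  ⟨PM.validEdgeSet_edges m, fun _ he => he, fun m' hm' => by
    rw [Subtype.ext (funext fun i => PM.mk_mem_edges_iff.1 (hm' _ (PM.mk_mem_edges m i)))]⟩

lemma exists_isPMCertFor_card_eq (f : PM N → ℝ) (m : PM N) :
    ∃ C, #C = pmCertComplexityAt f m ∧ IsPMCertFor f m C :=
  Nat.sInf_mem (s := {k | ∃ C, #C = k ∧ IsPMCertFor f m C})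
    ⟨#m.edges, m.edges, rfl, isPMCertFor_edges f m⟩

theorem two_le_card_inter_edges_of_isPMCertFor {F : Finset (PM N)}
    (hF : PMTwoIntersectingFamily F) {f : PM N → ℝ} (hf : ∀ m, f m = if m ∈ F then 1 else 0)
    {m m' : PM N} {C : Finset (Sym2 (Fin N))} (hm : m ∈ F) (hcert : IsPMCertFor f m C)
    (hN : 2 * #C + 4 ≤ N) (hm' : m' ∈ F) : 2 ≤ #(C ∩ m'.edges) := by
  obtain ⟨m'', hC'', hinter⟩ := PM.exists_edges_inter_subset m m' hcert.2.1 hN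
  have hm'' : m'' ∈ F := by
    by_contra h
    have := hcert.2.2 m'' hC''
    simp [hf, h, hm] at this
  calc 2 ≤ #(m''.edges ∩ m'.edges) := hF m'' hm'' m' hm'
    _ ≤ #(C ∩ m'.edges) := card_le_card fun e he => mem_inter.2 ⟨hinter he, (mem_inter.1 he).2⟩

theorem pmRCovered_of_two_le_card_inter {F : Finset (PM N)} {m : PM N}
    {C : Finset (Sym2 (Fin N))} (hC : C ⊆ m.edges) (hCne : C.Nonempty)
    (h : ∀ m' ∈ F, 2 ≤ #(C ∩ m'.edges)) : PMRCovered (#C - 1) F := by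
  obtain ⟨e₀, he₀⟩ := hCne
  refine ⟨C.erase e₀, card_erase_of_mem he₀, fun e he => PM.not_isDiag_of_mem_edges
    (hC (mem_of_mem_erase he)), fun e he e' he' => ⟨m, hC (mem_of_mem_erase he),
    hC (mem_of_mem_erase he')⟩, fun m' hm' => ?_⟩
  obtain ⟨e, he, hee₀⟩ := exists_mem_ne (h m' hm') e₀
  exact Set.mem_biUnion (mem_erase.2 ⟨hee₀, (mem_inter.1 he).1⟩) (mem_inter.1 he).2

end Certificates

/-- If `f` is the characteristic function of a 2-intersecting family
`F ⊆ M_{2n}` with `C(f) ≤ n - 2`, and `m ∈ F`, then `F` is `(C(f,m) - 1)`-covered. -/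
theorem pm_covering_lemma
    (n : ℕ) (F : Finset (PM (2 * n)))
    (hF : PMTwoIntersectingFamily F)
    (f : PM (2 * n) → ℝ)
    (hf : ∀ m, f m = if m ∈ F then 1 else 0)
    (hC : pmCertComplexity f ≤ n - 2)
    (m : PM (2 * n)) (hm : m ∈ F) :
    PMRCovered (pmCertComplexityAt f m - 1) F := by
  obtain ⟨C, hCcard, hcert⟩ := exists_isPMCertFor_card_eq f m
  have hn : 2 ≤ n := by
    have h := hF m hm m hm
    rw [PMTwoIntersecting, inter_self] at h
    have := m.two_mul_card_edges
    omega
  have hCn : #C ≤ n - 2 := hCcard ▸ (le_sup (mem_univ m)).trans hC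
  have hinter : ∀ m' ∈ F, 2 ≤ #(C ∩ m'.edges) := fun m' hm' =>
    two_le_card_inter_edges_of_isPMCertFor hF hf hm hcert (by omega) hm'
  have hCne : C.Nonempty := by
    have := (hinter m hm).trans (card_le_card inter_subset_left)
    exact card_pos.1 (by omega)
  exact hCcard ▸ pmRCovered_of_two_le_card_inter hcert.2.1 hCne hinter
end

section
/- There is no function g : {0,1}^4 → {0,1} whose unique representing multilinear real polynomial has degree at most 2 and which satisfies g(0,0,0,0) ≠ g(1,0,0,0) = g(0,1,0,0) = g(0,0,1,0) = g(0,0,0,1). In other words, no Boolean function on {0,1}^4 of degree at most 2 has sensitivity 4 at the all-zeros point with all four neighbors taking the opposite value to it and equal values to one another. -/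
def pt (s : List (Fin 4)) : Fin 4 → Bool := fun j => decide (j ∈ s)

def Eqs (g : (Fin 4 → Bool) → ℝ) : Prop :=
  (g (pt [0,1,2]) - g (pt [0,1]) - g (pt [0,2]) - g (pt [1,2])
    + g (pt [0]) + g (pt [1]) + g (pt [2]) - g (pt []) = 0) ∧
  (g (pt [0,1,3]) - g (pt [0,1]) - g (pt [0,3]) - g (pt [1,3])
    + g (pt [0]) + g (pt [1]) + g (pt [3]) - g (pt []) = 0) ∧
  (g (pt [0,2,3]) - g (pt [0,2]) - g (pt [0,3]) - g (pt [2,3])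
    + g (pt [0]) + g (pt [2]) + g (pt [3]) - g (pt []) = 0) ∧
  (g (pt [1,2,3]) - g (pt [1,2]) - g (pt [1,3]) - g (pt [2,3])
    + g (pt [1]) + g (pt [2]) + g (pt [3]) - g (pt []) = 0) ∧
  (g (pt [0,1,2,3]) - g (pt [0,1,2]) - g (pt [0,1,3]) - g (pt [0,2,3]) - g (pt [1,2,3])
    + g (pt [0,1]) + g (pt [0,2]) + g (pt [0,3]) + g (pt [1,2]) + g (pt [1,3]) + g (pt [2,3])
    - g (pt [0]) - g (pt [1]) - g (pt [2]) - g (pt [3]) + g (pt []) = 0)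

lemma span_eqs (g : (Fin 4 → Bool) → ℝ)
    (hg : g ∈ Submodule.span ℝ {h : (Fin 4 → Bool) → ℝ |
        ∃ S : Finset (Fin 4), S.card ≤ 2 ∧
          h = fun y => ∏ i ∈ S, if y i then (1 : ℝ) else 0}) :
    Eqs g := by
  induction hg using Submodule.span_induction with
  | mem h hh =>
      obtain ⟨S, hS, rfl⟩ := hh
      fin_cases S <;> simp_all [Eqs, pt]
  | zero => simp [Eqs]
  | add x y hx hy ihx ihy =>
      obtain ⟨a1,a2,a3,a4,a5⟩ := ihx; obtain ⟨b1,b2,b3,b4,b5⟩ := ihy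
      refine ⟨?_,?_,?_,?_,?_⟩ <;> simp only [Pi.add_apply] <;> linarith
  | smul c x hx ihx =>
      obtain ⟨a1,a2,a3,a4,a5⟩ := ihx
      refine ⟨?_,?_,?_,?_,?_⟩ <;> simp only [Pi.smul_apply, smul_eq_mul]
      · linear_combination c * a1
      · linear_combination c * a2
      · linear_combination c * a3
      · linear_combination c * a4
      · linear_combination c * a5

/-- No Boolean function on `{0,1}^4` whose multilinear polynomial
representation has degree at most 2 differs at the all-zeros point from all four of its
neighbors, with the four neighbors taking equal values. -/
theorem no_degree_two_full_sensitivity :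
    ¬ ∃ g : (Fin 4 → Bool) → ℝ,
      (∀ y, g y = 0 ∨ g y = 1) ∧
      g ∈ Submodule.span ℝ {h : (Fin 4 → Bool) → ℝ |
        ∃ S : Finset (Fin 4), S.card ≤ 2 ∧
          h = fun y => ∏ i ∈ S, if y i then (1 : ℝ) else 0} ∧
      g (fun _ => false) ≠ g (fun j => decide (j = 0)) ∧
      g (fun j => decide (j = 0)) = g (fun j => decide (j = 1)) ∧
      g (fun j => decide (j = 1)) = g (fun j => decide (j = 2)) ∧
      g (fun j => decide (j = 2)) = g (fun j => decide (j = 3)) := by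
  rintro ⟨g, hbool, hspan, hne, h01, h12, h23⟩
  obtain ⟨e1, e2, e3, e4, e5⟩ := span_eqs g hspan
  have hp0 : (fun _ : Fin 4 => false) = pt [] := by decide
  have hq0 : (fun j : Fin 4 => decide (j = 0)) = pt [0] := by decide
  have hq1 : (fun j : Fin 4 => decide (j = 1)) = pt [1] := by decide
  have hq2 : (fun j : Fin 4 => decide (j = 2)) = pt [2] := by decide
  have hq3 : (fun j : Fin 4 => decide (j = 3)) = pt [3] := by decide
  rw [hp0, hq0] at hne
  rw [hq0, hq1] at h01
  rw [hq1, hq2] at h12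
  rw [hq2, hq3] at h23
  have hb : ∀ y, 0 ≤ g y ∧ g y ≤ 1 := by
    intro y; rcases hbool y with h | h <;> simp [h]
  obtain ⟨l01, u01⟩ := hb (pt [0,1]); obtain ⟨l02, u02⟩ := hb (pt [0,2])
  obtain ⟨l03, u03⟩ := hb (pt [0,3]); obtain ⟨l12, u12⟩ := hb (pt [1,2])
  obtain ⟨l13, u13⟩ := hb (pt [1,3]); obtain ⟨l23, u23⟩ := hb (pt [2,3])
  obtain ⟨lF, uF⟩ := hb (pt [0,1,2,3])
  rcases hbool (pt []) with h0 | h0 <;> rcases hbool (pt [0]) with h1 | h1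
  · exact hne (h0.trans h1.symm)
  · linarith
  · linarith
  · exact hne (h0.trans h1.symm)
end
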